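/- Let $C$ be a convex polytope in $\mathbb{R}^3$ with nonempty interior, and let $K$ be a compact set such that $\operatorname{conv}(K) = C$ and $\pi_W(K) = \pi_W(C)$ for every two-dimensional linear subspace $W$ of $\mathbb{R}^3$. Then every edge of $C$ (every one-dimensional face of $C$) is contained in $K$; consequently $K$ is not totally disconnected. -/

import Mathlib

open Set Module

/-- Orthogonal projection onto a subspace, viewed as a map of the ambient space. -/
noncomputable def orthProj (W : Submodule ℝ (EuclideanSpace ℝ (Fin 3)))
    (x : EuclideanSpace ℝ (Fin 3)) : EuclideanSpace ℝ (Fin 3) :=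
  (W.orthogonalProjection x : EuclideanSpace ℝ (Fin 3))

/-- `E` is an edge of the convex set `C` in `ℝ³`: the intersection of `C` with a
supporting hyperplane which is a nondegenerate closed segment. -/
def IsEdgeOf (C E : Set (EuclideanSpace ℝ (Fin 3))) : Prop :=
  (∃ (f : EuclideanSpace ℝ (Fin 3) →L[ℝ] ℝ) (α : ℝ), f ≠ 0 ∧
    (∀ x ∈ C, f x ≤ α) ∧ (∃ x ∈ C, f x = α) ∧ E = {x ∈ C | f x = α}) ∧
  ∃ a b : EuclideanSpace ℝ (Fin 3), a ≠ b ∧ E = segment ℝ a b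

/-!
An edge `E` of `C` lies in a supporting plane `H`. Choose `u ≠ 0` parallel to `H` and orthogonal
to `E`, and project along `u` onto `W = u⊥`. A line parallel to `u` through a point `x` of `E`
stays in `H`, where it meets `C` only inside `E`, and it crosses `E` only once; so `x` is the only
point of `C` over `π_W x`. As `π_W K = π_W C` and `K ⊆ conv K = C`, this forces `x ∈ K`.

A polytope with nonempty interior has an edge: take a vertex `v`, then a vertex of the vertex
figure at `v`. A nondegenerate segment inside `K` is a nontrivial connected subset.
-/

open scoped RealInnerProductSpace

section VectorSpace

variable {V : Type*} [AddCommGroup V] [Module ℝ V]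

theorem Finset.sep_convexHull_eq_convexHull_filter (S : Finset V) (f : V →ₗ[ℝ] ℝ) {M : ℝ}
    (hM : ∀ s ∈ S, f s ≤ M) :
    {x ∈ convexHull ℝ (S : Set V) | f x = M} = convexHull ℝ ↑(S.filter (f · = M)) := by
  classical
  refine Set.Subset.antisymm ?_ fun x hx => ?_
  · rintro x ⟨hx, hfx⟩
    obtain ⟨w, hw0, hw1, rfl⟩ := Finset.mem_convexHull'.mp hx
    have hslack : ∑ s ∈ S, w s * (M - f s) = 0 := by
      simp only [mul_sub, Finset.sum_sub_distrib, ← Finset.sum_mul, hw1, one_mul]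
      simpa [map_sum] using sub_eq_zero.mpr hfx.symm
    have hsupp : ∀ s ∈ S, w s ≠ 0 → f s = M := fun s hs hws => by
      have := (Finset.sum_eq_zero_iff_of_nonneg fun s hs =>
        mul_nonneg (hw0 s hs) (sub_nonneg.mpr (hM s hs))).mp hslack s hs
      linarith [(mul_eq_zero.mp this).resolve_left hws]
    refine Finset.mem_convexHull'.mpr ⟨w, fun s hs => hw0 s (Finset.mem_filter.mp hs).1, ?_, ?_⟩
    · rwa [Finset.sum_filter_of_ne hsupp]
    · exact Finset.sum_filter_of_ne fun s hs hws => hsupp s hs fun h => hws (by simp [h])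
  · refine ⟨convexHull_mono (Finset.coe_subset.mpr (Finset.filter_subset _ S)) hx, ?_⟩
    exact convexHull_min (fun s hs => (Finset.mem_filter.mp hs).2)
      ((convex_singleton M).linear_preimage f) hx

theorem add_smul_mem_segment_add_smul {v u : V} {t T : ℝ} (ht : 0 ≤ t) (htT : t ≤ T) :
    v + t • u ∈ segment ℝ v (v + T • u) := by
  rcases ht.eq_or_lt with rfl | ht
  · simpa using left_mem_segment ℝ v (v + T • u)
  have hT : 0 < T := ht.trans_le htT
  refine ⟨1 - t / T, t / T, sub_nonneg.mpr (div_le_one_of_le₀ htT hT.le), div_nonneg ht.le hT.le,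
    sub_add_cancel _ _, ?_⟩
  rw [smul_add, smul_smul, div_mul_cancel₀ _ hT.ne', ← add_assoc, ← add_smul, sub_add_cancel,
    one_smul]

theorem Finset.convexHull_eq_segment_of_subset_ray (F : Finset V) {v u : V} (hv : v ∈ F)
    (τ : V → ℝ) (hτ : ∀ s ∈ F, 0 ≤ τ s ∧ s = v + τ s • u) :
    ∃ w ∈ F, convexHull ℝ (F : Set V) = segment ℝ v w := by
  obtain ⟨w, hw, hmax⟩ := F.exists_max_image τ ⟨v, hv⟩
  refine ⟨w, hw, Set.Subset.antisymm (convexHull_min (fun s hsF => ?_) (convex_segment v w))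
    (segment_subset_convexHull hv hw)⟩
  obtain ⟨hs0, hs⟩ := hτ s hsF
  rw [hs, (hτ w hw).2]
  exact add_smul_mem_segment_add_smul hs0 (hmax s hsF)

end VectorSpace

theorem interior_segment_eq_empty {E : Type*} [NormedAddCommGroup E] [NormedSpace ℝ E]
    (hE : 2 ≤ finrank ℝ E) (a b : E) : interior (segment ℝ a b) = ∅ := by
  rw [← convexHull_pair, ← not_nonempty_iff_eq_empty]
  intro hint
  have := (collinear_pair ℝ a b).finrank_le_one
  rw [AffineSubspace.vectorSpan_eq_top_of_affineSpan_eq_top ℝ E E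
    (affineSpan_eq_top_of_nonempty_interior hint), finrank_top] at this
  omega

section InnerProductSpace

variable {E : Type*} [NormedAddCommGroup E] [InnerProductSpace ℝ E]

theorem Finset.exists_mem_forall_inner_lt_inner_self (S : Finset E) (hS : S.Nonempty) :
    ∃ v ∈ S, ∀ s ∈ S, s ≠ v → ⟪v, s⟫ < ⟪v, v⟫ := by
  obtain ⟨v, hv, hmax⟩ := S.exists_max_image (‖·‖) hS
  refine ⟨v, hv, fun s hs hsv => lt_of_not_ge fun hle => hsv ?_⟩
  have hsq : ‖s - v‖ ^ 2 ≤ 0 := by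
    have := hmax s hs
    rw [norm_sub_sq_real, real_inner_comm, real_inner_self_eq_norm_sq] at *
    nlinarith [norm_nonneg s, norm_nonneg v]
  exact sub_eq_zero.mp (norm_eq_zero.mp (by nlinarith [norm_nonneg (s - v)]))

/-- The points `z s = (s - v) / (g v - g s)` lie on the hyperplane `g = -1`, which cuts the cone
of `S` at `v`; the functional `h` exposing a vertex `u` of their hull exposes the ray
`v + ℝ≥0 u`. -/
theorem Finset.exists_face_subset_ray (S : Finset E) {v : E} (g : E →L[ℝ] ℝ)
    (hg : ∀ s ∈ S, s ≠ v → g s < g v) (hS : ∃ s ∈ S, s ≠ v) :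
    ∃ (h : E →L[ℝ] ℝ) (u : E), (∀ s ∈ S, h s ≤ h v) ∧
      (∀ s ∈ S, h s = h v → s = v + (g v - g s) • u) ∧ ∃ s ∈ S, s ≠ v ∧ h s = h v := by
  classical
  set z : E → E := fun s => (g v - g s)⁻¹ • (s - v)
  have hsub : ∀ s ∈ S, s ≠ v → s - v = (g v - g s) • z s := fun s hs hsv =>
    (smul_inv_smul₀ (sub_pos.mpr (hg s hs hsv)).ne' _).symm
  have hzmem : ∀ s ∈ S, s ≠ v → z s ∈ (S.filter (· ≠ v)).image z := fun s hs hsv =>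
    Finset.mem_image_of_mem z (Finset.mem_filter.mpr ⟨hs, hsv⟩)
  obtain ⟨u, hu, hmax⟩ := ((S.filter (· ≠ v)).image z).exists_mem_forall_inner_lt_inner_self
    (by obtain ⟨s, hs, hsv⟩ := hS; exact ⟨z s, hzmem s hs hsv⟩)
  set h : E →L[ℝ] ℝ := innerSL ℝ u + ⟪u, u⟫ • g
  have hdiff : ∀ s ∈ S, s ≠ v → h s - h v = (g v - g s) * (⟪u, z s⟫ - ⟪u, u⟫) :=
    fun s hs hsv => by
      have : ⟪u, s - v⟫ = (g v - g s) * ⟪u, z s⟫ := by rw [hsub s hs hsv, real_inner_smul_right]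
      simp only [h, add_apply, smul_apply, innerSL_apply_apply, smul_eq_mul,
        inner_sub_right] at this ⊢
      linear_combination this
  refine ⟨h, u, fun s hs => ?_, fun s hs hhs => ?_, ?_⟩
  · rcases eq_or_ne s v with rfl | hsv
    · rfl
    have hzu : ⟪u, z s⟫ ≤ ⟪u, u⟫ := (eq_or_ne (z s) u).elim (fun h => h ▸ le_rfl)
      fun h => (hmax _ (hzmem s hs hsv) h).le
    nlinarith [hdiff s hs hsv, sub_pos.mpr (hg s hs hsv)]
  · rcases eq_or_ne s v with rfl | hsv
    · simp
    have hzu : ⟪u, z s⟫ = ⟪u, u⟫ := by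
      have := hdiff s hs hsv
      rw [hhs, sub_self, eq_comm, mul_eq_zero] at this
      linarith [this.resolve_left (sub_pos.mpr (hg s hs hsv)).ne']
    have : z s = u := by_contra fun h => (hmax _ (hzmem s hs hsv) h).ne hzu
    rw [← this, ← hsub s hs hsv, add_sub_cancel]
  · obtain ⟨b, hb, rfl⟩ := Finset.mem_image.mp hu
    obtain ⟨hbS, hbv⟩ := Finset.mem_filter.mp hb
    exact ⟨b, hbS, hbv, sub_eq_zero.mp (by rw [hdiff b hbS hbv, sub_self, mul_zero])⟩

theorem exists_ne_zero_inner_eq_zero_and_inner_eq_zero [FiniteDimensional ℝ E]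
    (hE : 3 ≤ finrank ℝ E) (x y : E) : ∃ u ≠ 0, ⟪u, x⟫ = 0 ∧ ⟪u, y⟫ = 0 := by
  classical
  have hspan : Submodule.span ℝ {x, y} ≠ ⊤ := fun h => by
    have := finrank_span_finset_le_card (R := ℝ) ({x, y} : Finset E)
    rw [Set.finrank, Finset.coe_pair, h, finrank_top] at this
    have := Finset.card_le_two (a := x) (b := y)
    omega
  obtain ⟨u, hu, hu0⟩ := (Submodule.ne_bot_iff _).mp (mt Submodule.orthogonal_eq_bot_iff.mp hspan)
  refine ⟨u, hu0, ?_, ?_⟩ <;> rw [real_inner_comm] <;>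
    exact Submodule.inner_right_of_mem_orthogonal (Submodule.subset_span (by simp)) hu

end InnerProductSpace

section Euclidean3

local notation "E3" => EuclideanSpace ℝ (Fin 3)

theorem orthProj_eq_orthProj_iff (W : Submodule ℝ E3) {x y : E3} :
    orthProj W x = orthProj W y ↔ x - y ∈ Wᗮ := by
  rw [← sub_eq_zero, ← W.ker_starProjection, LinearMap.mem_ker, map_sub]
  rfl

theorem exists_isEdgeOf_convexHull (S : Finset E3)
    (hint : (interior (convexHull ℝ (S : Set E3))).Nonempty) :
    ∃ E, IsEdgeOf (convexHull ℝ ↑S) E := by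
  classical
  have hnot_segment : ∀ a b : E3, ¬ convexHull ℝ (S : Set E3) ⊆ segment ℝ a b := fun a b h =>
    hint.ne_empty (subset_eq_empty (interior_mono h) (interior_segment_eq_empty (by simp) a b))
  obtain ⟨v, hv, hvmax⟩ := S.exists_mem_forall_inner_lt_inner_self
    (Finset.nonempty_iff_ne_empty.mpr (by rintro rfl; simp at hint))
  have hother : ∃ s ∈ S, s ≠ v := by
    by_contra! hsub
    exact hnot_segment v v (segment_same ℝ v ▸ convexHull_min hsub (convex_singleton v))
  obtain ⟨h, u, hle, hray, b, hb, hbv, hhb⟩ := S.exists_face_subset_ray (innerSL ℝ v) hvmax hother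
  obtain ⟨w, -, hFw⟩ := (S.filter (h · = h v)).convexHull_eq_segment_of_subset_ray
    (Finset.mem_filter.mpr ⟨hv, rfl⟩) (fun s => ⟪v, v⟫ - ⟪v, s⟫) fun s hs => by
      obtain ⟨hsS, hhs⟩ := Finset.mem_filter.mp hs
      refine ⟨sub_nonneg.mpr ?_, hray s hsS hhs⟩
      rcases eq_or_ne s v with rfl | hsv
      exacts [le_rfl, (hvmax s hsS hsv).le]
  have hface : {x ∈ convexHull ℝ ↑S | h x = h v} = segment ℝ v w :=
    (S.sep_convexHull_eq_convexHull_filter h.toLinearMap hle).trans hFw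
  have hvw : v ≠ w := by
    rintro rfl
    have hbface : b ∈ {x ∈ convexHull ℝ ↑S | h x = h v} := ⟨subset_convexHull ℝ _ hb, hhb⟩
    rw [hface, segment_same] at hbface
    exact hbv hbface
  have hh : h ≠ 0 := by
    rintro rfl
    exact hnot_segment v w (hface ▸ fun x hx => ⟨hx, rfl⟩)
  refine ⟨_, ⟨h, h v, hh, fun x hx => ?_, ⟨v, subset_convexHull ℝ _ hv, rfl⟩, rfl⟩, v, w, hvw,
    hface⟩
  exact convexHull_min hle ((convex_Iic (h v)).linear_preimage h.toLinearMap) hx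

theorem IsEdgeOf.exists_direction_add_smul_mem_eq_zero {C E : Set E3} (hE : IsEdgeOf C E) :
    ∃ u ≠ 0, ∀ x ∈ E, ∀ t : ℝ, x + t • u ∈ C → t = 0 := by
  obtain ⟨⟨f, α, -, -, -, rfl⟩, a, b, -, hab⟩ := hE
  obtain ⟨u, hu0, hfu, hub⟩ := exists_ne_zero_inner_eq_zero_and_inner_eq_zero (by simp)
    ((InnerProductSpace.toDual ℝ E3).symm f) (b - a)
  rw [real_inner_comm, InnerProductSpace.toDual_symm_apply] at hfu
  have hconst : ∀ y ∈ segment ℝ a b, ⟪u, y⟫ = ⟪u, a⟫ := by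
    rw [segment_eq_image']
    rintro _ ⟨θ, -, rfl⟩
    simp [inner_add_right, real_inner_smul_right, hub]
  refine ⟨u, hu0, fun x hx t hxt => ?_⟩
  have hxt' : x + t • u ∈ {x ∈ C | f x = α} := ⟨hxt, by simp [hfu, hx.2]⟩
  rw [hab] at hx hxt'
  have := hconst _ hxt'
  rw [inner_add_right, real_inner_smul_right, hconst x hx, add_eq_left] at this
  exact (mul_eq_zero.mp this).resolve_right (inner_self_ne_zero.mpr hu0)

theorem IsEdgeOf.subset_of_orthProj_image_eq {C K E : Set E3} (hE : IsEdgeOf C E)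
    (hKC : K ⊆ C)
    (hKproj : ∀ W : Submodule ℝ E3, finrank ℝ W = 2 → orthProj W '' K = orthProj W '' C) :
    E ⊆ K := by
  have hEC : E ⊆ C := by
    obtain ⟨⟨f, α, -, -, -, rfl⟩, -⟩ := hE
    exact sep_subset _ _
  obtain ⟨u, hu0, hfib⟩ := hE.exists_direction_add_smul_mem_eq_zero
  have hW : finrank ℝ (ℝ ∙ u)ᗮ = 2 := by
    have := (ℝ ∙ u).finrank_add_finrank_orthogonal
    rw [finrank_span_singleton hu0, finrank_euclideanSpace_fin] at this
    omega
  intro x hx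
  obtain ⟨k, hk, hkx⟩ : orthProj (ℝ ∙ u)ᗮ x ∈ orthProj (ℝ ∙ u)ᗮ '' K :=
    hKproj _ hW ▸ mem_image_of_mem _ (hEC hx)
  obtain ⟨t, ht⟩ := Submodule.mem_span_singleton.mp
    ((ℝ ∙ u).orthogonal_orthogonal ▸ (orthProj_eq_orthProj_iff _).mp hkx)
  rw [eq_sub_iff_add_eq', eq_comm] at ht
  rw [ht] at hk
  rwa [hfib x hx t (hKC hk), zero_smul, add_zero] at hk

end Euclidean3

theorem edges_subset_of_twoDim_fractalDecomposable_general
    (C : Set (EuclideanSpace ℝ (Fin 3))) (S : Finset (EuclideanSpace ℝ (Fin 3)))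
    (hC : C = convexHull ℝ (S : Set (EuclideanSpace ℝ (Fin 3))))
    (hint : (interior C).Nonempty)
    (K : Set (EuclideanSpace ℝ (Fin 3)))
    (hKhull : convexHull ℝ K = C)
    (hKproj : ∀ (W : Submodule ℝ (EuclideanSpace ℝ (Fin 3))), finrank ℝ W = 2 →
      orthProj W '' K = orthProj W '' C) :
    (∀ E : Set (EuclideanSpace ℝ (Fin 3)), IsEdgeOf C E → E ⊆ K) ∧
    ¬ IsTotallyDisconnected K := by
  have hKC : K ⊆ C := hKhull ▸ subset_convexHull ℝ K
  have hedges : ∀ E, IsEdgeOf C E → E ⊆ K := fun E hE =>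
    hE.subset_of_orthProj_image_eq hKC hKproj
  refine ⟨hedges, fun htd => ?_⟩
  subst hC
  obtain ⟨E, hE⟩ := exists_isEdgeOf_convexHull S hint
  obtain ⟨a, b, hab, rfl⟩ := hE.2
  exact hab (htd _ (hedges _ hE) (convex_segment a b).isPreconnected
    (left_mem_segment ℝ a b) (right_mem_segment ℝ a b))

/-- If a convex polytope `C ⊆ ℝ³` with nonempty interior is 2-dimensional
fractal-decomposable with a compact set `K`, then every edge of `C` is contained in `K`;
consequently `K` is not totally disconnected. -/
theorem edges_subset_of_twoDim_fractalDecomposable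
    (C : Set (EuclideanSpace ℝ (Fin 3))) (S : Finset (EuclideanSpace ℝ (Fin 3)))
    (hC : C = convexHull ℝ (S : Set (EuclideanSpace ℝ (Fin 3))))
    (hint : (interior C).Nonempty)
    (K : Set (EuclideanSpace ℝ (Fin 3))) (hKcpt : IsCompact K)
    (hKhull : convexHull ℝ K = C)
    (hKproj : ∀ (W : Submodule ℝ (EuclideanSpace ℝ (Fin 3))), finrank ℝ W = 2 →
      orthProj W '' K = orthProj W '' C) :
    (∀ E : Set (EuclideanSpace ℝ (Fin 3)), IsEdgeOf C E → E ⊆ K) ∧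
    ¬ IsTotallyDisconnected K :=
  edges_subset_of_twoDim_fractalDecomposable_general C S hC hint K hKhull hKproj
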